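/- In the Jordanian quantum group algebra A(R) with g = h, the quantum determinant D = ad - bc + hac is central. -/
import Mathlib


/-- Generators of the Jordanian quantum group algebra `A(R)`. -/
inductive JGen : Type | a | b | c | d

noncomputable def Fa : FreeAlgebra ℂ JGen := FreeAlgebra.ι ℂ JGen.a
noncomputable def Fb : FreeAlgebra ℂ JGen := FreeAlgebra.ι ℂ JGen.b
noncomputable def Fc : FreeAlgebra ℂ JGen := FreeAlgebra.ι ℂ JGen.c
noncomputable def Fd : FreeAlgebra ℂ JGen := FreeAlgebra.ι ℂ JGen.d

/-- The six defining relations of the Jordanian quantum group `GL_{h,g}(2)`. -/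
inductive JRel (h g : ℂ) : FreeAlgebra ℂ JGen → FreeAlgebra ℂ JGen → Prop
  | ca : JRel h g (Fc * Fa) (Fa * Fc - g • (Fc * Fc))
  | cd : JRel h g (Fc * Fd) (Fd * Fc - h • (Fc * Fc))
  | db : JRel h g (Fd * Fb) (Fb * Fd + g • (Fa * Fd - Fb * Fc + h • (Fa * Fc) - Fd * Fd))
  | ab : JRel h g (Fa * Fb) (Fb * Fa + h • (Fa * Fd - Fb * Fc + h • (Fa * Fc) - Fa * Fa))
  | cb : JRel h g (Fc * Fb) (Fb * Fc - h • (Fa * Fc) - g • (Fd * Fc) + (g * h) • (Fc * Fc))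
  | da : JRel h g (Fd * Fa) (Fa * Fd + h • (Fa * Fc) - g • (Fd * Fc))

/-- The Jordanian quantum group algebra `A(R)`. -/
abbrev JA (h g : ℂ) := RingQuot (JRel h g)

noncomputable def qa (h g : ℂ) : JA h g := RingQuot.mkAlgHom ℂ (JRel h g) Fa
noncomputable def qb (h g : ℂ) : JA h g := RingQuot.mkAlgHom ℂ (JRel h g) Fb
noncomputable def qc (h g : ℂ) : JA h g := RingQuot.mkAlgHom ℂ (JRel h g) Fc
noncomputable def qd (h g : ℂ) : JA h g := RingQuot.mkAlgHom ℂ (JRel h g) Fd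

/-- The quantum determinant `D = ad - bc + hac`. -/
noncomputable def qdet (h g : ℂ) : JA h g :=
  qa h g * qd h g - qb h g * qc h g + h • (qa h g * qc h g)

section Generic

variable {R : Type*} [Ring R] [Algebra ℂ R]

/-- Centrality of the quantum determinant, proved abstractly from the six relations
in an arbitrary `ℂ`-algebra. -/
theorem jdet_central_generic (h : ℂ) (A B C D : R)
    (rca : C * A = A * C - h • (C * C))
    (rcd : C * D = D * C - h • (C * C))
    (rdb : D * B = B * D + h • (A * D - B * C + h • (A * C) - D * D))
    (rab : A * B = B * A + h • (A * D - B * C + h • (A * C) - A * A))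
    (rcb : C * B = B * C - h • (A * C) - h • (D * C) + (h * h) • (C * C))
    (rda : D * A = A * D + h • (A * C) - h • (D * C)) :
    ((A * D - B * C + h • (A * C)) * A = A * (A * D - B * C + h • (A * C))) ∧
    ((A * D - B * C + h • (A * C)) * B = B * (A * D - B * C + h • (A * C))) ∧
    ((A * D - B * C + h • (A * C)) * C = C * (A * D - B * C + h • (A * C))) ∧
    ((A * D - B * C + h • (A * C)) * D = D * (A * D - B * C + h • (A * C))) := by
  have zca : C * A - (A * C - h • (C * C)) = 0 := sub_eq_zero.mpr rca
  have zcd : C * D - (D * C - h • (C * C)) = 0 := sub_eq_zero.mpr rcd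
  have zdb : D * B - (B * D + h • (A * D - B * C + h • (A * C) - D * D)) = 0 :=
    sub_eq_zero.mpr rdb
  have zab : A * B - (B * A + h • (A * D - B * C + h • (A * C) - A * A)) = 0 :=
    sub_eq_zero.mpr rab
  have zcb : C * B - (B * C - h • (A * C) - h • (D * C) + (h * h) • (C * C)) = 0 :=
    sub_eq_zero.mpr rcb
  have zda : D * A - (A * D + h • (A * C) - h • (D * C)) = 0 := sub_eq_zero.mpr rda
  refine ⟨?_, ?_, ?_, ?_⟩
  · rw [← sub_eq_zero]
    have key : (A * D - B * C + h • (A * C)) * A - A * (A * D - B * C + h • (A * C)) =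
        h • (A * (C * A - (A * C - h • (C * C))))
        + A * (D * A - (A * D + h • (A * C) - h • (D * C)))
        - B * (C * A - (A * C - h • (C * C)))
        + (A * B - (B * A + h • (A * D - B * C + h • (A * C) - A * A))) * C := by
      simp only [smul_sub, smul_add, mul_add, add_mul, mul_sub, sub_mul, smul_mul_assoc,
        mul_smul_comm, smul_smul, mul_assoc]
      module
    rw [key, zca, zda, zab]
    simp
  · rw [← sub_eq_zero]
    have key : (A * D - B * C + h • (A * C)) * B - B * (A * D - B * C + h • (A * C)) =
        h • (A * (C * B - (B * C - h • (A * C) - h • (D * C) + (h * h) • (C * C))))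
        + A * (D * B - (B * D + h • (A * D - B * C + h • (A * C) - D * D)))
        + (A * B - (B * A + h • (A * D - B * C + h • (A * C) - A * A))) * D
        + (h * h) • (A * (C * D - (D * C - h • (C * C))))
        - B * (C * B - (B * C - h • (A * C) - h • (D * C) + (h * h) • (C * C)))
        - h • (B * (C * D - (D * C - h • (C * C)))) := by
      simp only [smul_sub, smul_add, mul_add, add_mul, mul_sub, sub_mul, smul_mul_assoc,
        mul_smul_comm, smul_smul, mul_assoc]
      module
    rw [key, zcb, zdb, zab, zcd]
    simp
  · rw [← sub_eq_zero]
    have key : (A * D - B * C + h • (A * C)) * C - C * (A * D - B * C + h • (A * C)) =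
        -(h • ((C * A - (A * C - h • (C * C))) * C))
        - (C * A - (A * C - h • (C * C))) * D
        - A * (C * D - (D * C - h • (C * C)))
        + (C * B - (B * C - h • (A * C) - h • (D * C) + (h * h) • (C * C))) * C
        + h • (C * (C * D - (D * C - h • (C * C))))
        + h • ((C * D - (D * C - h • (C * C))) * C) := by
      simp only [smul_sub, smul_add, mul_add, add_mul, mul_sub, sub_mul, smul_mul_assoc,
        mul_smul_comm, smul_smul, mul_assoc]
      module
    rw [key, zca, zcd, zcb]
    simp
  · rw [← sub_eq_zero]
    have key : (A * D - B * C + h • (A * C)) * D - D * (A * D - B * C + h • (A * C)) =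
        -(B * (C * D - (D * C - h • (C * C))))
        - h • ((D * A - (A * D + h • (A * C) - h • (D * C))) * C)
        - (D * A - (A * D + h • (A * C) - h • (D * C))) * D
        + (D * B - (B * D + h • (A * D - B * C + h • (A * C) - D * D))) * C
        + h • (D * (C * D - (D * C - h • (C * C)))) := by
      simp only [smul_sub, smul_add, mul_add, add_mul, mul_sub, sub_mul, smul_mul_assoc,
        mul_smul_comm, smul_smul, mul_assoc]
      module
    rw [key, zcd, zda, zdb]
    simp

end Generic

/-- With `g = h`, the quantum determinant of the Jordanian quantum group is central. -/
theorem qdet_central (h : ℂ) :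
    qdet h h * qa h h = qa h h * qdet h h ∧
    qdet h h * qb h h = qb h h * qdet h h ∧
    qdet h h * qc h h = qc h h * qdet h h ∧
    qdet h h * qd h h = qd h h * qdet h h := by
  have rca : qc h h * qa h h = qa h h * qc h h - h • (qc h h * qc h h) := by
    simpa only [map_mul, map_sub, map_smul, qa, qc] using
      RingQuot.mkAlgHom_rel ℂ (JRel.ca (h := h) (g := h))
  have rcd : qc h h * qd h h = qd h h * qc h h - h • (qc h h * qc h h) := by
    simpa only [map_mul, map_sub, map_smul, qc, qd] using
      RingQuot.mkAlgHom_rel ℂ (JRel.cd (h := h) (g := h))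
  have rdb : qd h h * qb h h = qb h h * qd h h +
      h • (qa h h * qd h h - qb h h * qc h h + h • (qa h h * qc h h) - qd h h * qd h h) := by
    simpa only [map_mul, map_sub, map_add, map_smul, qa, qb, qc, qd] using
      RingQuot.mkAlgHom_rel ℂ (JRel.db (h := h) (g := h))
  have rab : qa h h * qb h h = qb h h * qa h h +
      h • (qa h h * qd h h - qb h h * qc h h + h • (qa h h * qc h h) - qa h h * qa h h) := by
    simpa only [map_mul, map_sub, map_add, map_smul, qa, qb, qc, qd] using
      RingQuot.mkAlgHom_rel ℂ (JRel.ab (h := h) (g := h))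
  have rcb : qc h h * qb h h = qb h h * qc h h - h • (qa h h * qc h h)
      - h • (qd h h * qc h h) + (h * h) • (qc h h * qc h h) := by
    simpa only [map_mul, map_sub, map_add, map_smul, qa, qb, qc, qd] using
      RingQuot.mkAlgHom_rel ℂ (JRel.cb (h := h) (g := h))
  have rda : qd h h * qa h h = qa h h * qd h h + h • (qa h h * qc h h)
      - h • (qd h h * qc h h) := by
    simpa only [map_mul, map_sub, map_add, map_smul, qa, qc, qd] using
      RingQuot.mkAlgHom_rel ℂ (JRel.da (h := h) (g := h))
  have := jdet_central_generic h (qa h h) (qb h h) (qc h h) (qd h h)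
    rca rcd rdb rab rcb rda
  simpa only [qdet] using this
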